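/- arXiv:0907.1152 — 2 statements merged into one kernel-verified Lean document; each statement's English description precedes it below -/
import Mathlib

section
/- Let $R$ be a commutative ring, let $a : \{1,2,\dots\} \to R$ be a sequence, and let coefficients $p_{k,i} \in R$ ($1 \le i \le k$) be such that $a_{k+1} = \sum_{i=1}^k p_{k,i} a_i$ for every $k \ge 1$. Then for every $k \ge 1$, $a_{k+1} = a_1 \cdot \det M$, where $M$ is the $k \times k$ matrix over $R$ with entries $M_{i,j} = p_{j,i}$ for $i \le j$, $M_{j+1,j} = -1$ for $1 \le j \le k-1$, and $M_{i,j} = 0$ for $i > j+1$. -/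
/-!
With `u = (a₁, …, a_k)`, the recurrence says exactly that `u M = a_{k+1} e_k`: column `j < k` of
`M` encodes `a_{j+1} = ∑_{i ≤ j} p_{j,i} a_i`, and column `k` produces `a_{k+1}`. Cramer's rule
then gives `a₁ det M = a_{k+1} (adj M)_{k,1}`, and this cofactor is `1`: deleting the first row
and last column of `M` leaves an upper triangular matrix with `-1` on the diagonal, whose
determinant `(-1)^(k-1)` cancels the sign of the cofactor.
-/

open Finset Matrix

section

variable {R : Type*} [CommRing R]

theorem mul_det_eq_of_vecMul_eq_single {n : Type*} [Fintype n] [DecidableEq n]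
    {A : Matrix n n R} {u : n → R} {i : n} {b : R} (h : u ᵥ* A = Pi.single i b) (j : n) :
    u j * A.det = b * A.adjugate i j := by
  have hj := congrFun (congrArg (· ᵥ* A.adjugate) h) j
  simp only [vecMul_vecMul, mul_adjugate, vecMul_smul, vecMul_one, single_vecMul] at hj
  simpa [mul_comm] using hj

theorem sum_range_mul_hessenberg_column (b c : ℕ → R) {j m : ℕ} (hjm : j < m) :
    ∑ i ∈ range m, b i * (if i ≤ j then c i else if i = j + 1 then -1 else 0) =
      ∑ i ∈ range (j + 1), b i * c i - if j + 1 < m then b (j + 1) else 0 := by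
  induction m, hjm using Nat.le_induction with
  | base =>
    rw [if_neg (lt_irrefl _), sub_zero]
    exact sum_congr rfl fun i hi => by rw [if_pos (Nat.lt_succ_iff.mp (mem_range.mp hi))]
  | succ m hjm ih =>
    rw [sum_range_succ, ih, if_neg (by omega : ¬ m ≤ j)]
    rcases (Nat.succ_le_of_lt hjm).eq_or_lt with rfl | hlt
    · simp [sub_eq_add_neg]
    · simp [hlt, hlt.trans (Nat.lt_succ_self m), hlt.ne']

def recurrenceMatrix (p : ℕ → ℕ → R) (k : ℕ) : Matrix (Fin k) (Fin k) R :=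
  of fun i j => if (i : ℕ) ≤ j then p (j + 1) (i + 1) else if (i : ℕ) = j + 1 then -1 else 0

theorem eq_sum_range_of_recurrence {a : ℕ → R} {p : ℕ → ℕ → R}
    (hrec : ∀ k ≥ 1, a (k + 1) = ∑ i ∈ Icc 1 k, p k i * a i) (j : ℕ) :
    a (j + 2) = ∑ i ∈ range (j + 1), a (i + 1) * p (j + 1) (i + 1) := by
  rw [hrec (j + 1) (by omega), range_eq_Ico, sum_Ico_add' (fun i => a i * p (j + 1) i),
    Ico_add_one_right_eq_Icc]
  simp_rw [mul_comm]

theorem vecMul_recurrenceMatrix {a : ℕ → R} {p : ℕ → ℕ → R}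
    (hrec : ∀ k ≥ 1, a (k + 1) = ∑ i ∈ Icc 1 k, p k i * a i) (n : ℕ) :
    (fun i : Fin (n + 1) => a (i + 1)) ᵥ* recurrenceMatrix p (n + 1) =
      Pi.single (Fin.last n) (a (n + 2)) := by
  funext j
  rw [vecMul, dotProduct]
  simp only [recurrenceMatrix, of_apply]
  rw [Fin.sum_univ_eq_sum_range (fun i => a (i + 1) *
      (if i ≤ j then p (j + 1) (i + 1) else if i = j + 1 then -1 else 0)),
    sum_range_mul_hessenberg_column _ _ j.isLt, ← eq_sum_range_of_recurrence hrec]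
  by_cases hj : j = Fin.last n
  · subst hj
    simp
  · have hjn : (j : ℕ) + 1 < n + 1 := Nat.succ_lt_succ (Fin.val_lt_last hj)
    rw [if_pos hjn, Pi.single_eq_of_ne hj, sub_self]

theorem adjugate_recurrenceMatrix_last_zero (p : ℕ → ℕ → R) (n : ℕ) :
    adjugate (recurrenceMatrix p (n + 1)) (Fin.last n) 0 = 1 := by
  rw [adjugate_fin_succ_eq_det_submatrix, det_of_isUpperTriangular]
  · simp [recurrenceMatrix, Fin.succAbove_last, ← mul_pow]
  · intro i j hij
    replace hij : (j : ℕ) < i := hij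
    simp only [recurrenceMatrix, Fin.succAbove_zero, Fin.succAbove_last, submatrix_apply,
      of_apply, Fin.val_castSucc, Fin.val_succ]
    rw [if_neg (by omega), if_neg (by omega)]

end

/-- **Theorem 1.1.** Let `R` be a commutative ring, `a` a sequence in `R` (indexed from 1),
and `p k i` coefficients such that `a (k+1) = ∑_{i=1}^k p k i * a i` for all `k ≥ 1`.
Then `a (k+1) = a 1 * det M` where `M` is the `k × k` matrix with `M i j = p j i` for
`i ≤ j`, `M (j+1) j = -1`, and `0` below the subdiagonal (indices written 1-based). -/
theorem recurrence_det (R : Type*) [CommRing R] (a : ℕ → R) (p : ℕ → ℕ → R)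
    (hrec : ∀ k ≥ 1, a (k + 1) = ∑ i ∈ Finset.Icc 1 k, p k i * a i) :
    ∀ k ≥ 1, a (k + 1) =
      a 1 * Matrix.det (Matrix.of (fun i j : Fin k =>
        if (i : ℕ) ≤ (j : ℕ) then p ((j : ℕ) + 1) ((i : ℕ) + 1)
        else if (i : ℕ) = (j : ℕ) + 1 then -1
        else 0)) := by
  rintro k hk
  obtain ⟨n, rfl⟩ := Nat.exists_eq_add_of_le' hk
  have cramer := mul_det_eq_of_vecMul_eq_single (vecMul_recurrenceMatrix hrec n) 0
  rw [adjugate_recurrenceMatrix_last_zero, mul_one] at cramer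
  exact cramer.symm
end

section
/- Let $R$ be a commutative ring and let $L_0, L_1, L_2, \dots$ be the Lucas polynomials in $R[x]$, defined by $L_0 = 2$, $L_1 = x$, and $L_{k+1} = x L_k + L_{k-1}$ for $k \ge 1$. Then for every $n \ge 1$, $L_n$ equals the determinant of the $n \times n$ matrix $M$ over $R[x]$ with all diagonal entries equal to $x$, superdiagonal entries $M_{1,2} = 2$ and $M_{i,i+1} = 1$ for $2 \le i \le n-1$, all subdiagonal entries $M_{i+1,i} = -1$, and all other entries $0$. -/
open Polynomial

private noncomputable def lucM (R : Type*) [CommRing R] (n : ℕ) : Matrix (Fin n) (Fin n) R[X] :=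
  Matrix.of (fun i j : Fin n =>
        if (i : ℕ) = (j : ℕ) then X
        else if (j : ℕ) = (i : ℕ) + 1 then (if (i : ℕ) = 0 then 2 else 1)
        else if (i : ℕ) = (j : ℕ) + 1 then -1
        else (0 : R[X]))

private lemma lucM_apply (R : Type*) [CommRing R] {n : ℕ} (i j : Fin n) :
    lucM R n i j =
      if (i : ℕ) = (j : ℕ) then X
        else if (j : ℕ) = (i : ℕ) + 1 then (if (i : ℕ) = 0 then 2 else 1)
        else if (i : ℕ) = (j : ℕ) + 1 then -1
        else (0 : R[X]) := rfl

private lemma lucC_det (R : Type*) [CommRing R] (n : ℕ) :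
    ((lucM R (n+2)).submatrix ((Fin.last n).castSucc).succAbove Fin.castSucc).det
      = - (lucM R n).det := by
  rw [Matrix.det_succ_row _ (Fin.last n), Fin.sum_univ_castSucc]
  have hz : ∀ j : Fin n,
      ((lucM R (n+2)).submatrix ((Fin.last n).castSucc).succAbove Fin.castSucc)
        (Fin.last n) j.castSucc = 0 := by
    intro j
    rw [Matrix.submatrix_apply,
      Fin.succAbove_of_le_castSucc _ _ (by simp [Fin.le_def]),
      lucM_apply]
    have hj : (j : ℕ) < n := j.isLt
    simp only [Fin.val_succ, Fin.val_last, Fin.coe_castSucc]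
    rw [if_neg (by omega), if_neg (by omega), if_neg (by omega)]
  have hsum : ∑ j : Fin n, (-1 : R[X]) ^ ((Fin.last n : ℕ) + (j.castSucc : ℕ)) *
      ((lucM R (n+2)).submatrix ((Fin.last n).castSucc).succAbove Fin.castSucc)
        (Fin.last n) j.castSucc *
      (((lucM R (n+2)).submatrix ((Fin.last n).castSucc).succAbove Fin.castSucc).submatrix
        (Fin.last n).succAbove j.castSucc.succAbove).det = 0 := by
    apply Finset.sum_eq_zero
    intro j _
    rw [hz j, mul_zero, zero_mul]
  rw [hsum, zero_add]
  have hentry : ((lucM R (n+2)).submatrix ((Fin.last n).castSucc).succAbove Fin.castSucc)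
      (Fin.last n) (Fin.last n) = -1 := by
    rw [Matrix.submatrix_apply,
      Fin.succAbove_of_le_castSucc _ _ (by simp [Fin.le_def]), lucM_apply]
    simp only [Fin.val_succ, Fin.val_last, Fin.coe_castSucc]
    rw [if_neg (by omega), if_neg (by omega)]
    simp
  have hsub : (((lucM R (n+2)).submatrix ((Fin.last n).castSucc).succAbove Fin.castSucc).submatrix
      (Fin.last n).succAbove (Fin.last n).succAbove) = lucM R n := by
    refine Matrix.ext fun i j => ?_
    rw [Matrix.submatrix_apply, Matrix.submatrix_apply, Fin.succAbove_last,
      Fin.succAbove_castSucc_of_lt _ _ (by simp [Fin.lt_def, i.isLt]),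
      lucM_apply, lucM_apply]
    simp only [Fin.coe_castSucc]
  rw [hentry, hsub]
  have hpow : (-1 : R[X]) ^ ((Fin.last n : ℕ) + (Fin.last n : ℕ)) = 1 := by
    simp only [Fin.val_last]
    exact Even.neg_one_pow ⟨n, rfl⟩
  rw [hpow]
  ring

private lemma lucD_rec (R : Type*) [CommRing R] (n : ℕ) :
    (lucM R (n+2)).det = X * (lucM R (n+1)).det
      + (if n = 0 then 2 else 1) * (lucM R n).det := by
  rw [Matrix.det_succ_column _ (Fin.last (n+1)), Fin.sum_univ_castSucc, Fin.sum_univ_castSucc]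
  have hsum : ∑ i : Fin n, (-1 : R[X]) ^ ((i.castSucc.castSucc : ℕ) + (Fin.last (n+1) : ℕ)) *
      (lucM R (n+2)) i.castSucc.castSucc (Fin.last (n+1)) *
      ((lucM R (n+2)).submatrix i.castSucc.castSucc.succAbove
        (Fin.last (n+1)).succAbove).det = 0 := by
    apply Finset.sum_eq_zero
    intro i _
    have hi : (i : ℕ) < n := i.isLt
    rw [lucM_apply]
    simp only [Fin.coe_castSucc, Fin.val_last]
    rw [if_neg (by omega), if_neg (by omega), if_neg (by omega), mul_zero, zero_mul]
  rw [hsum, zero_add]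
  have hlast : (-1 : R[X]) ^ ((Fin.last (n+1) : ℕ) + (Fin.last (n+1) : ℕ)) *
      (lucM R (n+2)) (Fin.last (n+1)) (Fin.last (n+1)) *
      ((lucM R (n+2)).submatrix (Fin.last (n+1)).succAbove
        (Fin.last (n+1)).succAbove).det = X * (lucM R (n+1)).det := by
    have h1 : (lucM R (n+2)) (Fin.last (n+1)) (Fin.last (n+1)) = X := by
      rw [lucM_apply, if_pos rfl]
    have h2 : ((lucM R (n+2)).submatrix (Fin.last (n+1)).succAbove
        (Fin.last (n+1)).succAbove) = lucM R (n+1) := by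
      refine Matrix.ext fun i j => ?_
      rw [Matrix.submatrix_apply, Fin.succAbove_last, lucM_apply, lucM_apply]
      simp only [Fin.coe_castSucc]
    have h3 : (-1 : R[X]) ^ ((Fin.last (n+1) : ℕ) + (Fin.last (n+1) : ℕ)) = 1 := by
      simp only [Fin.val_last]
      exact Even.neg_one_pow ⟨n+1, rfl⟩
    rw [h1, h2, h3, one_mul]
  have hmid : (-1 : R[X]) ^ (((Fin.last n).castSucc : ℕ) + (Fin.last (n+1) : ℕ)) *
      (lucM R (n+2)) (Fin.last n).castSucc (Fin.last (n+1)) *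
      ((lucM R (n+2)).submatrix ((Fin.last n).castSucc).succAbove
        (Fin.last (n+1)).succAbove).det
      = (if n = 0 then 2 else 1) * (lucM R n).det := by
    have h1 : (lucM R (n+2)) (Fin.last n).castSucc (Fin.last (n+1))
        = (if n = 0 then 2 else 1) := by
      rw [lucM_apply]
      simp only [Fin.coe_castSucc, Fin.val_last]
      rw [if_neg (by omega)]
      simp
    have h3 : (-1 : R[X]) ^ (((Fin.last n).castSucc : ℕ) + (Fin.last (n+1) : ℕ)) = -1 := by
      simp only [Fin.coe_castSucc, Fin.val_last]
      exact Odd.neg_one_pow ⟨n, by ring⟩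
    rw [h1, h3, Fin.succAbove_last, lucC_det]
    ring
  rw [hmid, hlast]
  ring

/-- Let `L 0 = 2`, `L 1 = X`, `L (k+1) = X * L k + L (k-1)` be the Lucas polynomials
over a commutative ring `R`. Then for `n ≥ 1`, `L n` equals the determinant of the
`n × n` matrix with diagonal `X`, superdiagonal `(2, 1, 1, …, 1)` (i.e. `M 1 2 = 2`
and the other superdiagonal entries `1`, 1-based), subdiagonal `-1`, other entries `0`. -/
theorem lucas_polynomial_as_det (R : Type*) [CommRing R] (L : ℕ → R[X])
    (hL0 : L 0 = 2) (hL1 : L 1 = X)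
    (hrec : ∀ k ≥ 1, L (k + 1) = X * L k + L (k - 1)) :
    ∀ n ≥ 1, L n =
      Matrix.det (Matrix.of (fun i j : Fin n =>
        if (i : ℕ) = (j : ℕ) then X
        else if (j : ℕ) = (i : ℕ) + 1 then (if (i : ℕ) = 0 then 2 else 1)
        else if (i : ℕ) = (j : ℕ) + 1 then -1
        else (0 : R[X]))) := by
  have d0 : (lucM R 0).det = 1 := Matrix.det_fin_zero
  have d1 : (lucM R 1).det = X := by
    rw [Matrix.det_fin_one, lucM_apply, if_pos rfl]
  have key : ∀ n : ℕ, L (n+1) = (lucM R (n+1)).det := by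
    have main : ∀ n : ℕ, L (n+1) = (lucM R (n+1)).det ∧ L (n+2) = (lucM R (n+2)).det := by
      intro n
      induction n with
      | zero =>
        constructor
        · show L 1 = (lucM R 1).det
          rw [hL1, d1]
        · show L 2 = (lucM R 2).det
          have hr := hrec 1 le_rfl
          norm_num at hr
          have hd := lucD_rec R 0
          norm_num at hd
          rw [hr, hL1, hL0, hd, d1]
      | succ m ih =>
        refine ⟨ih.2, ?_⟩
        have hr := hrec (m+2) (by omega)
        have e : m + 2 - 1 = m + 1 := rfl
        rw [e] at hr
        show L (m+2+1) = (lucM R ((m+1)+2)).det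
        rw [hr, ih.1, ih.2, lucD_rec R (m+1), if_neg (by omega), one_mul]
    intro n
    exact (main n).1
  intro n hn
  obtain ⟨m, rfl⟩ : ∃ m, n = m + 1 := ⟨n - 1, by omega⟩
  exact key m
end
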